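/- arXiv:2409.14591 — 3 statements merged into one kernel-verified Lean document; each statement's English description precedes it below -/
import Mathlib

section
/- In the topos of trees S = Set^{N^op}, there exists a guarded fixed point operator: for every object X, a morphism fix_X : [LX → X] → X satisfying eval_{LX,X} ∘ ⟨id_{[LX→X]}, ν_X ∘ fix_X⟩ = fix_X, where L is the later functor and ν : id ⇒ L is the 'next' natural transformation. -/
open CategoryTheory CategoryTheory.Limits

universe v u

/-- An object of `C^∞ = C^{ℕᵒᵖ}`: a cochain `X(0) ← X(1) ← X(2) ← ⋯` in `C`. -/
structure GObj (C : Type u) [Category.{v} C] where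
  obj : ℕ → C
  res : ∀ n, obj (n + 1) ⟶ obj n

namespace GObj

variable {C : Type u} [Category.{v} C]

/-- A morphism in `C^∞`: a natural transformation between cochains. -/
@[ext]
structure GHom (X Y : GObj C) where
  app : ∀ n, X.obj n ⟶ Y.obj n
  nat : ∀ n, X.res n ≫ app n = app (n + 1) ≫ Y.res n

instance : Category (GObj C) where
  Hom := GHom
  id X := { app := fun _ => 𝟙 _, nat := by intro n; simp }
  comp {X Y Z} f g :=
    { app := fun n => f.app n ≫ g.app n
      nat := by
        intro n
        rw [← Category.assoc, f.nat, Category.assoc, g.nat, ← Category.assoc] }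
  id_comp f := by apply GHom.ext; funext n; simp
  comp_id f := by apply GHom.ext; funext n; simp
  assoc f g h := by apply GHom.ext; funext n; simp

@[simp] theorem id_app (X : GObj C) (n : ℕ) : (𝟙 X : X ⟶ X).app n = 𝟙 (X.obj n) := rfl

@[simp] theorem comp_app {X Y Z : GObj C} (f : X ⟶ Y) (g : Y ⟶ Z) (n : ℕ) :
    (f ≫ g).app n = f.app n ≫ g.app n := rfl

/-- The constant cochain on an object of `C`. -/
def constG (T : C) : GObj C where
  obj _ := T
  res _ := 𝟙 T

end GObj

namespace GObj

variable {C : Type u} [Category.{v} C]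

/-- A truncated natural transformation `(f_0, …, f_n)` from `X` to `Y`. -/
@[ext]
structure TruncHom (X Y : GObj C) (n : ℕ) where
  app : ∀ k, k ≤ n → (X.obj k ⟶ Y.obj k)
  nat : ∀ k (h : k + 1 ≤ n),
    X.res k ≫ app k (Nat.le_of_succ_le h) = app (k + 1) h ≫ Y.res k

/-- Restriction of truncated natural transformations: forget the last component. -/
def tres {X Y : GObj C} {n : ℕ} (f : TruncHom X Y (n + 1)) : TruncHom X Y n where
  app k h := f.app k (h.trans (Nat.le_succ n))
  nat k h := f.nat k (h.trans (Nat.le_succ n))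

/-- The truncated identity natural transformation. -/
def tid (X : GObj C) (n : ℕ) : TruncHom X X n where
  app k _ := 𝟙 (X.obj k)
  nat k _ := by simp

/-- Componentwise composition of truncated natural transformations. -/
def tcomp {X Y Z : GObj C} {n : ℕ} (g : TruncHom Y Z n) (f : TruncHom X Y n) :
    TruncHom X Z n where
  app k h := f.app k h ≫ g.app k h
  nat k h := by
    rw [← Category.assoc, f.nat k h, Category.assoc, g.nat k h, ← Category.assoc]

/-- The truncation of a (global) morphism of `C^∞`. -/
def trunc {X Y : GObj C} (f : X ⟶ Y) (n : ℕ) : TruncHom X Y n where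
  app k _ := f.app k
  nat k _ := f.nat k

/-- The hom-object of the `S`-enrichment of `C^∞`: an object of the topos of
trees `S = Set^{ℕᵒᵖ}` whose `n`-th component is the set of truncated natural
transformations of length `n`, with restriction forgetting the last component. -/
def homObj (X Y : GObj C) : GObj (Type v) where
  obj n := TruncHom X Y n
  res _ := TypeCat.ofHom tres

end GObj

namespace GObj

/-- Object part of the later functor on the topos of trees. -/
def LaterTObj (A : GObj (Type u)) : ℕ → Type u
  | 0 => PUnit
  | n + 1 => A.obj n

/-- The later functor `L : S → S` on (objects of) the topos of trees. -/
def LaterT (A : GObj (Type u)) : GObj (Type u) where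
  obj := LaterTObj A
  res n :=
    match n with
    | 0 => TypeCat.ofHom fun _ => PUnit.unit
    | n + 1 => A.res n

/-- The `next` natural transformation `ν_A : A → L A` in the topos of trees. -/
def nextT (A : GObj (Type u)) : A ⟶ LaterT A where
  app n :=
    match n with
    | 0 => TypeCat.ofHom fun _ => PUnit.unit
    | n + 1 => A.res n
  nat n := by
    cases n with
    | zero => rfl
    | succ n => rfl

/-- Pointwise cartesian product in the topos of trees. -/
def GProd (A B : GObj (Type u)) : GObj (Type u) where
  obj n := A.obj n × B.obj n
  res n := TypeCat.ofHom fun p => (A.res n p.1, B.res n p.2)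

/-- Pairing for the pointwise cartesian product. -/
def gpair {Z A B : GObj (Type u)} (f : Z ⟶ A) (g : Z ⟶ B) : Z ⟶ GProd A B where
  app n := TypeCat.ofHom fun z => (f.app n z, g.app n z)
  nat n := by
    ext z
    have h1 := ConcreteCategory.congr_hom (f.nat n) z
    have h2 := ConcreteCategory.congr_hom (g.nat n) z
    first
      | exact Prod.ext h1 h2
      | (simp only [types_comp_apply] at h1 h2 ⊢; exact Prod.ext h1 h2)
      | (simp only [types_comp_apply, TypeCat.ofHom_apply] at h1 h2 ⊢; exact Prod.ext h1 h2)

/-- Evaluation `[A → B] × A → B` for the exponential `[A → B] = homObj A B`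
in the topos of trees. -/
def gev (A B : GObj (Type u)) : GProd (homObj A B) A ⟶ B where
  app n := TypeCat.ofHom fun p => p.1.app n (le_refl n) p.2
  nat n := by
    ext p
    exact ConcreteCategory.congr_hom (p.1.nat n (le_refl (n + 1))) p.2

end GObj

/-! The fixed point of `f = (f_0, …, f_n)` is built stage by stage: `fix_0 f = f_0 (*)`, using the
unique point of `L X (0) = 1`, and `fix_{k+1} f = f_{k+1} (fix_k f)`, since `L X (k+1) = X (k)`.
Naturality of `f` makes the restriction of `fix_{k+1} f` equal to `fix_k` of the restricted `f`,
and since `ν` at stage `k+1` is this restriction, the fixed point equation reduces to the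
defining recursion. -/

namespace GObj

theorem TruncHom.nat_apply {X Y : GObj (Type u)} {n : ℕ} (f : TruncHom X Y n) (k : ℕ)
    (h : k + 1 ≤ n) (x : X.obj (k + 1)) :
    f.app k (Nat.le_of_succ_le h) (X.res k x) = Y.res k (f.app (k + 1) h x) :=
  ConcreteCategory.congr_hom (f.nat k h) x

variable (X : GObj (Type u))

def fixApp : ∀ n, TruncHom (LaterT X) X n → X.obj n
  | 0, f => f.app 0 le_rfl (show (LaterT X).obj 0 from PUnit.unit)
  | n + 1, f => f.app (n + 1) le_rfl (show (LaterT X).obj (n + 1) from fixApp n (tres f))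

theorem res_fixApp (n : ℕ) (f : TruncHom (LaterT X) X (n + 1)) :
    X.res n (fixApp X (n + 1) f) = fixApp X n (tres f) := by
  induction n with
  | zero => exact (f.nat_apply 0 le_rfl _).symm
  | succ n ih =>
    calc X.res (n + 1) (fixApp X (n + 2) f)
        = f.app (n + 1) _ (X.res n (fixApp X (n + 1) (tres f))) := (f.nat_apply _ le_rfl _).symm
      _ = fixApp X (n + 1) (tres f) := by rw [ih]; rfl

def guardedFix : homObj (LaterT X) X ⟶ X where
  app n := TypeCat.ofHom (fixApp X n)
  nat n := by
    ext f
    exact (res_fixApp X n f).symm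

theorem fixApp_eq (n : ℕ) (f : TruncHom (LaterT X) X n) :
    f.app n le_rfl ((nextT X).app n (fixApp X n f)) = fixApp X n f := by
  cases n with
  | zero => rfl
  | succ n =>
    change f.app (n + 1) le_rfl (X.res n (fixApp X (n + 1) f)) = _
    rw [res_fixApp]
    rfl

theorem guardedFix_eq :
    gpair (𝟙 (homObj (LaterT X) X)) (guardedFix X ≫ nextT X) ≫ gev (LaterT X) X =
      guardedFix X := by
  apply GHom.ext
  funext n
  ext f
  exact fixApp_eq X n f

end GObj

open GObj in
/-- **Guarded fixed points in the topos of trees.** For every object `X` of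
`S = Set^{ℕᵒᵖ}` there is a morphism `fix_X : [L X → X] → X` satisfying
`eval_{LX,X} ∘ ⟨id_{[LX→X]}, ν_X ∘ fix_X⟩ = fix_X`. -/
theorem guarded_fixed_point_topos_of_trees (X : GObj (Type u)) :
    ∃ fix : homObj (LaterT X) X ⟶ X,
      gpair (𝟙 (homObj (LaterT X) X)) (fix ≫ nextT X) ≫ gev (LaterT X) X = fix :=
  ⟨guardedFix X, guardedFix_eq X⟩
end

section
/- Let C be a category with a terminal object. The category C^∞ = C^{N^op} is enriched in the topos of trees S = Set^{N^op}, with hom-object C^∞(X,Y)(n) defined as the set of truncated natural transformations (f_0, ..., f_n), restriction maps forgetting the last component, identity elements given by truncated identities, and composition given by componentwise composition of truncated natural transformations. -/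
open CategoryTheory CategoryTheory.Limits

universe v u

namespace GObj

variable {C : Type u} [Category.{v} C] {X Y Z W : GObj C}

theorem tres_tcomp {n : ℕ} (g : TruncHom Y Z (n + 1)) (f : TruncHom X Y (n + 1)) :
    tres (tcomp g f) = tcomp (tres g) (tres f) :=
  rfl

theorem tres_tid (X : GObj C) (n : ℕ) : tres (tid X (n + 1)) = tid X n :=
  rfl

@[simp] theorem tid_tcomp {n : ℕ} (f : TruncHom X Y n) : tcomp (tid Y n) f = f := by
  ext k hk
  exact Category.comp_id _

@[simp] theorem tcomp_tid {n : ℕ} (f : TruncHom X Y n) : tcomp f (tid X n) = f := by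
  ext k hk
  exact Category.id_comp _

theorem tcomp_assoc {n : ℕ} (h : TruncHom Z W n) (g : TruncHom Y Z n) (f : TruncHom X Y n) :
    tcomp h (tcomp g f) = tcomp (tcomp h g) f := by
  ext k hk
  exact Category.assoc _ _ _

end GObj

open GObj in
/-- **`C^∞` is enriched in the topos of trees.** The hom-objects are given by
`homObj X Y`, whose `n`-th component is the set of truncated natural
transformations `(f_0, …, f_n)` with restriction maps forgetting the last
component; the identities are the truncated identities and composition is
componentwise.  The enrichment laws: composition and identities are morphisms
in `S` (they commute with the restriction maps `tres` of `homObj`), and the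
unit and associativity laws hold. -/
theorem guarded_construction_enriched_in_topos_of_trees
    {C : Type u} [Category.{v} C] (X Y Z W : GObj C) (n : ℕ)
    (f : TruncHom X Y n) (g : TruncHom Y Z n) (h : TruncHom Z W n)
    (f' : TruncHom X Y (n + 1)) (g' : TruncHom Y Z (n + 1)) :
    tres (tcomp g' f') = tcomp (tres g') (tres f') ∧
    tres (tid X (n + 1)) = tid X n ∧
    tcomp (tid Y n) f = f ∧
    tcomp f (tid X n) = f ∧
    tcomp h (tcomp g f) = tcomp (tcomp h g) f :=
  ⟨tres_tcomp g' f', tres_tid X n, tid_tcomp f, tcomp_tid f, tcomp_assoc h g f⟩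
end

section
/- Let C be a dagger rig category. If f : X₁ → Y₁ and g : X₂ → Y₂ are daggerable morphisms in C_e^∞, then f ⊗ g : X₁ ⊗ X₂ → Y₁ ⊗ Y₂ and f ⊕ g : X₁ ⊕ X₂ → Y₁ ⊕ Y₂ are daggerable, with (f ⊗ g)^† = f^† ⊗ g^† and (f ⊕ g)^† = f^† ⊕ g^† (componentwise). -/
open CategoryTheory CategoryTheory.Limits

universe v u

/-- A dagger structure on a category: an involutive, identity-on-objects,
contravariant endofunctor. -/
structure DaggerStruct (C : Type u) [Category.{v} C] where
  dag : ∀ {X Y : C}, (X ⟶ Y) → (Y ⟶ X)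
  dag_dag : ∀ {X Y : C} (f : X ⟶ Y), dag (dag f) = f
  dag_id : ∀ X : C, dag (𝟙 X) = 𝟙 X
  dag_comp : ∀ {X Y Z : C} (f : X ⟶ Y) (g : Y ⟶ Z), dag (f ≫ g) = dag g ≫ dag f

/-- A rig category structure: two symmetric monoidal structures `(⊗, I)` and
`(⊕, O)` together with natural distributivity and absorption isomorphisms.
(The full list of Laplaza coherence conditions is omitted.) -/
structure RigStruct (C : Type u) [Category.{v} C] where
  tensorM : MonoidalCategory C
  tensorSym : @SymmetricCategory C _ tensorM
  plusM : MonoidalCategory C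
  plusSym : @SymmetricCategory C _ plusM
  distribL : ∀ X Y Z : C,
    tensorM.tensorObj (plusM.tensorObj X Y) Z ≅
      plusM.tensorObj (tensorM.tensorObj X Z) (tensorM.tensorObj Y Z)
  distribR : ∀ X Y Z : C,
    tensorM.tensorObj Z (plusM.tensorObj X Y) ≅
      plusM.tensorObj (tensorM.tensorObj Z X) (tensorM.tensorObj Z Y)
  absorbL : ∀ X : C, tensorM.tensorObj plusM.tensorUnit X ≅ plusM.tensorUnit
  absorbR : ∀ X : C, tensorM.tensorObj X plusM.tensorUnit ≅ plusM.tensorUnit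
  distribL_nat : ∀ {X X' Y Y' Z Z' : C} (f : X ⟶ X') (g : Y ⟶ Y') (h : Z ⟶ Z'),
    tensorM.tensorHom (plusM.tensorHom f g) h ≫ (distribL X' Y' Z').hom =
      (distribL X Y Z).hom ≫
        plusM.tensorHom (tensorM.tensorHom f h) (tensorM.tensorHom g h)
  distribR_nat : ∀ {X X' Y Y' Z Z' : C} (f : X ⟶ X') (g : Y ⟶ Y') (h : Z ⟶ Z'),
    tensorM.tensorHom h (plusM.tensorHom f g) ≫ (distribR X' Y' Z').hom =
      (distribR X Y Z).hom ≫
        plusM.tensorHom (tensorM.tensorHom h f) (tensorM.tensorHom h g)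

/-- A dagger rig category: a rig category with a dagger for which `⊗` and `⊕`
are dagger functors and the coherence isomorphisms are dagger isomorphisms. -/
structure DaggerRig (C : Type u) [Category.{v} C] extends DaggerStruct C, RigStruct C where
  dag_tensorHom : ∀ {X₁ Y₁ X₂ Y₂ : C} (f : X₁ ⟶ Y₁) (g : X₂ ⟶ Y₂),
    dag (tensorM.tensorHom f g) = tensorM.tensorHom (dag f) (dag g)
  dag_plusHom : ∀ {X₁ Y₁ X₂ Y₂ : C} (f : X₁ ⟶ Y₁) (g : X₂ ⟶ Y₂),
    dag (plusM.tensorHom f g) = plusM.tensorHom (dag f) (dag g)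
  tensor_assoc_unitary : ∀ X Y Z : C,
    dag (tensorM.associator X Y Z).hom = (tensorM.associator X Y Z).inv
  tensor_lUnit_unitary : ∀ X : C,
    dag (tensorM.leftUnitor X).hom = (tensorM.leftUnitor X).inv
  tensor_rUnit_unitary : ∀ X : C,
    dag (tensorM.rightUnitor X).hom = (tensorM.rightUnitor X).inv
  tensor_braid_unitary : ∀ X Y : C,
    dag (tensorSym.braiding X Y).hom = (tensorSym.braiding X Y).inv
  plus_assoc_unitary : ∀ X Y Z : C,
    dag (plusM.associator X Y Z).hom = (plusM.associator X Y Z).inv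
  plus_lUnit_unitary : ∀ X : C,
    dag (plusM.leftUnitor X).hom = (plusM.leftUnitor X).inv
  plus_rUnit_unitary : ∀ X : C,
    dag (plusM.rightUnitor X).hom = (plusM.rightUnitor X).inv
  plus_braid_unitary : ∀ X Y : C,
    dag (plusSym.braiding X Y).hom = (plusSym.braiding X Y).inv
  distribL_unitary : ∀ X Y Z : C, dag (distribL X Y Z).hom = (distribL X Y Z).inv
  distribR_unitary : ∀ X Y Z : C, dag (distribR X Y Z).hom = (distribR X Y Z).inv
  absorbL_unitary : ∀ X : C, dag (absorbL X).hom = (absorbL X).inv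
  absorbR_unitary : ∀ X : C, dag (absorbR X).hom = (absorbR X).inv

namespace GObj

variable {C : Type u} [Category.{v} C]

/-- A morphism of `C^∞` is daggerable if its componentwise daggers form a
natural transformation in the opposite direction. -/
def Daggerable (D : DaggerStruct C) {X Y : GObj C} (f : X ⟶ Y) : Prop :=
  ∃ g : Y ⟶ X, ∀ n, g.app n = D.dag (f.app n)

end GObj

namespace GObj

variable {C : Type u} [Category.{v} C]

/-- Pointwise monoidal product on `C^∞` induced by a monoidal structure on `C`. -/
def gObj2 (M : MonoidalCategory C) (X Y : GObj C) : GObj C where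
  obj n := M.tensorObj (X.obj n) (Y.obj n)
  res n := M.tensorHom (X.res n) (Y.res n)

/-- Pointwise monoidal product of morphisms of `C^∞`. -/
def gHom2 (M : MonoidalCategory C) {X X' Y Y' : GObj C} (f : X ⟶ X') (g : Y ⟶ Y') :
    gObj2 M X Y ⟶ gObj2 M X' Y' where
  app n := M.tensorHom (f.app n) (g.app n)
  nat n := by
    letI := M
    show M.tensorHom (X.res n) (Y.res n) ≫ M.tensorHom (f.app n) (g.app n) =
      M.tensorHom (f.app (n + 1)) (g.app (n + 1)) ≫ M.tensorHom (X'.res n) (Y'.res n)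
    rw [MonoidalCategory.tensorHom_comp_tensorHom, MonoidalCategory.tensorHom_comp_tensorHom, f.nat, g.nat]

end GObj

namespace GObj

variable {C : Type u} [Category.{v} C]

/-- The left injection `ι₁ : A ⟶ A ⊕ B` in a `⊕`-semicartesian setting,
obtained as `(ρ^⊕_A)⁻¹` followed by `id_A ⊕ ¡_B`. -/
noncomputable def iotaC1 (M : MonoidalCategory C) (hZ : IsZero M.tensorUnit) (A B : C) :
    A ⟶ M.tensorObj A B :=
  (M.rightUnitor A).inv ≫ M.tensorHom (𝟙 A) (hZ.to_ B)

/-- The right injection `ι₂ : B ⟶ A ⊕ B`. -/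
noncomputable def iotaC2 (M : MonoidalCategory C) (hZ : IsZero M.tensorUnit) (A B : C) :
    B ⟶ M.tensorObj A B :=
  (M.leftUnitor B).inv ≫ M.tensorHom (hZ.to_ A) (𝟙 B)

/-- The left injection, pointwise on `C^∞`. -/
noncomputable def giota1 (M : MonoidalCategory C) (hZ : IsZero M.tensorUnit) (X₁ X₂ : GObj C) :
    X₁ ⟶ gObj2 M X₁ X₂ where
  app n := iotaC1 M hZ (X₁.obj n) (X₂.obj n)
  nat n := by
    have tc : ∀ {X₁ Y₁ Z₁ X₂ Y₂ Z₂ : C} (f₁ : X₁ ⟶ Y₁) (f₂ : X₂ ⟶ Y₂) (g₁ : Y₁ ⟶ Z₁)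
        (g₂ : Y₂ ⟶ Z₂), M.tensorHom (f₁ ≫ g₁) (f₂ ≫ g₂) = M.tensorHom f₁ f₂ ≫ M.tensorHom g₁ g₂ :=
      fun f₁ f₂ g₁ g₂ => (M.tensorHom_comp_tensorHom f₁ f₂ g₁ g₂).symm
    have run := @MonoidalCategory.rightUnitor_inv_naturality C _ M
    have thi := @MonoidalCategory.tensorHom_id C _ M
    show X₁.res n ≫ ((M.rightUnitor _).inv ≫ M.tensorHom (𝟙 _) (hZ.to_ _)) =
      ((M.rightUnitor _).inv ≫ M.tensorHom (𝟙 _) (hZ.to_ _)) ≫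
        M.tensorHom (X₁.res n) (X₂.res n)
    rw [← Category.assoc, run, Category.assoc, Category.assoc, ← thi, ← tc, ← tc]
    simp only [Category.id_comp, Category.comp_id]
    congr 1
    exact congrArg (fun b => M.tensorHom (X₁.res n) b) (hZ.eq_of_src _ _)

/-- The right injection, pointwise on `C^∞`. -/
noncomputable def giota2 (M : MonoidalCategory C) (hZ : IsZero M.tensorUnit) (X₁ X₂ : GObj C) :
    X₂ ⟶ gObj2 M X₁ X₂ where
  app n := iotaC2 M hZ (X₁.obj n) (X₂.obj n)
  nat n := by
    have tc : ∀ {X₁ Y₁ Z₁ X₂ Y₂ Z₂ : C} (f₁ : X₁ ⟶ Y₁) (f₂ : X₂ ⟶ Y₂) (g₁ : Y₁ ⟶ Z₁)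
        (g₂ : Y₂ ⟶ Z₂), M.tensorHom (f₁ ≫ g₁) (f₂ ≫ g₂) = M.tensorHom f₁ f₂ ≫ M.tensorHom g₁ g₂ :=
      fun f₁ f₂ g₁ g₂ => (M.tensorHom_comp_tensorHom f₁ f₂ g₁ g₂).symm
    have lun := @MonoidalCategory.leftUnitor_inv_naturality C _ M
    have ith := @MonoidalCategory.id_tensorHom C _ M
    show X₂.res n ≫ ((M.leftUnitor _).inv ≫ M.tensorHom (hZ.to_ _) (𝟙 _)) =
      ((M.leftUnitor _).inv ≫ M.tensorHom (hZ.to_ _) (𝟙 _)) ≫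
        M.tensorHom (X₁.res n) (X₂.res n)
    rw [← Category.assoc, lun, Category.assoc, Category.assoc, ← ith, ← tc, ← tc]
    simp only [Category.id_comp, Category.comp_id]
    congr 1
    exact congrArg (fun a => M.tensorHom a (X₂.res n)) (hZ.eq_of_src _ _)

end GObj

namespace GObj

variable {C : Type u} [Category.{v} C] (D : DaggerStruct C) (M : MonoidalCategory C)
  (hM : ∀ {X₁ Y₁ X₂ Y₂ : C} (f : X₁ ⟶ Y₁) (g : X₂ ⟶ Y₂),
    D.dag (M.tensorHom f g) = M.tensorHom (D.dag f) (D.dag g))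
  {X₁ X₂ Y₁ Y₂ : GObj C}

include hM in
theorem dag_gHom2_app (f : X₁ ⟶ Y₁) (g : X₂ ⟶ Y₂) (n : ℕ) :
    D.dag ((gHom2 M f g).app n) = M.tensorHom (D.dag (f.app n)) (D.dag (g.app n)) :=
  hM (f.app n) (g.app n)

include hM in
theorem Daggerable.gHom2 {f : X₁ ⟶ Y₁} {g : X₂ ⟶ Y₂} (hf : Daggerable D f)
    (hg : Daggerable D g) : Daggerable D (GObj.gHom2 M f g) := by
  obtain ⟨f', hf'⟩ := hf
  obtain ⟨g', hg'⟩ := hg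
  refine ⟨GObj.gHom2 M f' g', fun n => ?_⟩
  rw [dag_gHom2_app D M hM]
  exact congrArg₂ M.tensorHom (hf' n) (hg' n)

end GObj

open GObj in
theorem daggerable_tensor_and_plus_general {C : Type u} [Category.{v} C]
    (R : DaggerRig C) (X₁ X₂ Y₁ Y₂ : GObj C)
    (f : X₁ ⟶ Y₁) (g : X₂ ⟶ Y₂)
    (hf : Daggerable R.toDaggerStruct f) (hg : Daggerable R.toDaggerStruct g) :
    (∃ h : gObj2 R.tensorM Y₁ Y₂ ⟶ gObj2 R.tensorM X₁ X₂,
      ∀ n, h.app n = R.dag ((gHom2 R.tensorM f g).app n) ∧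
        R.dag ((gHom2 R.tensorM f g).app n) =
          R.tensorM.tensorHom (R.dag (f.app n)) (R.dag (g.app n))) ∧
    (∃ h : gObj2 R.plusM Y₁ Y₂ ⟶ gObj2 R.plusM X₁ X₂,
      ∀ n, h.app n = R.dag ((gHom2 R.plusM f g).app n) ∧
        R.dag ((gHom2 R.plusM f g).app n) =
          R.plusM.tensorHom (R.dag (f.app n)) (R.dag (g.app n))) := by
  obtain ⟨fgDagTensor, hTensor⟩ := hf.gHom2 _ R.tensorM R.dag_tensorHom hg
  obtain ⟨fgDagPlus, hPlus⟩ := hf.gHom2 _ R.plusM R.dag_plusHom hg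
  exact ⟨⟨fgDagTensor, fun n => ⟨hTensor n, dag_gHom2_app _ _ R.dag_tensorHom f g n⟩⟩,
    ⟨fgDagPlus, fun n => ⟨hPlus n, dag_gHom2_app _ _ R.dag_plusHom f g n⟩⟩⟩

open GObj in
/-- If `f` and `g` are daggerable morphisms of `C_e^∞` over a dagger rig
category, then `f ⊗ g` and `f ⊕ g` are daggerable, with
`(f ⊗ g)^† = f^† ⊗ g^†` and `(f ⊕ g)^† = f^† ⊕ g^†` componentwise. -/
theorem daggerable_tensor_and_plus {C : Type u} [Category.{v} C]
    (R : DaggerRig C) (X₁ X₂ Y₁ Y₂ : GObj C)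
    (hX₁ : ∀ n, R.dag (X₁.res n) ≫ X₁.res n = 𝟙 (X₁.obj n))
    (hX₂ : ∀ n, R.dag (X₂.res n) ≫ X₂.res n = 𝟙 (X₂.obj n))
    (hY₁ : ∀ n, R.dag (Y₁.res n) ≫ Y₁.res n = 𝟙 (Y₁.obj n))
    (hY₂ : ∀ n, R.dag (Y₂.res n) ≫ Y₂.res n = 𝟙 (Y₂.obj n))
    (f : X₁ ⟶ Y₁) (g : X₂ ⟶ Y₂)
    (hf : Daggerable R.toDaggerStruct f) (hg : Daggerable R.toDaggerStruct g) :
    (∃ h : gObj2 R.tensorM Y₁ Y₂ ⟶ gObj2 R.tensorM X₁ X₂,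
      ∀ n, h.app n = R.dag ((gHom2 R.tensorM f g).app n) ∧
        R.dag ((gHom2 R.tensorM f g).app n) =
          R.tensorM.tensorHom (R.dag (f.app n)) (R.dag (g.app n))) ∧
    (∃ h : gObj2 R.plusM Y₁ Y₂ ⟶ gObj2 R.plusM X₁ X₂,
      ∀ n, h.app n = R.dag ((gHom2 R.plusM f g).app n) ∧
        R.dag ((gHom2 R.plusM f g).app n) =
          R.plusM.tensorHom (R.dag (f.app n)) (R.dag (g.app n))) :=
  daggerable_tensor_and_plus_general R X₁ X₂ Y₁ Y₂ f g hf hg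
end
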